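/- Let μ be a probability measure on ℝ^d, let s ≠ 0 and σ > 0 be reals, and let w : ℝ^d → [0,∞) be a bounded measurable function with ∫ w dμ > 0. Define g_w(x) = ∫ w(x₀) · exp(−‖x − s·x₀‖²/(2 s² σ²)) dμ(x₀) and m_w(x) = (∫ x₀ · w(x₀) · exp(−‖x − s·x₀‖²/(2 s² σ²)) dμ(x₀)) / g_w(x). Then g_w(x) > 0 for every x ∈ ℝ^d, g_w is differentiable, and ∇ log g_w(x) = (s·m_w(x) − x)/(s² σ²) for all x. (Conditional Tweedie's formula: the score of the y-conditional noisy marginal, with likelihood weight w(x₀) = p(y|x₀), equals (s·E[x₀|x_t, y] − x_t)/(s²σ²).) -/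

import Mathlib

/-! Differentiating under the integral sign, with the domination
`|w a| · ‖x - s a‖ e^{-‖x - s a‖²/A} ≤ (1 + A) |w a|` (`A = 2 s² σ²`), gives
`∇ g_w x = -(2/A) ∫ w(a) e^{-‖x - s a‖²/A} (x - s a) dμ(a) = -(2/A) (g_w(x) x - s g_w(x) m_w(x))`.
Since the Gaussian kernel is positive, `g_w > 0`, and dividing by it is the chain rule for `log`. -/

open MeasureTheory Real Filter Topology InnerProductSpace

lemma mul_exp_neg_sq_div_le {A : ℝ} (hA : 0 < A) (t : ℝ) : t * exp (-t ^ 2 / A) ≤ 1 + A := by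
  rw [neg_div, exp_neg, ← div_eq_mul_inv, div_le_iff₀ (exp_pos _)]
  calc t ≤ (1 + A) * (1 + t ^ 2 / A) := by
        have hu : A * (t ^ 2 / A) = t ^ 2 := mul_div_cancel₀ _ hA.ne'
        nlinarith [sq_nonneg (t - 1 / 2), div_nonneg (sq_nonneg t) hA.le]
    _ ≤ (1 + A) * exp (t ^ 2 / A) := by gcongr; linarith [add_one_le_exp (t ^ 2 / A)]

section Gradient

variable {E : Type*} [NormedAddCommGroup E] [InnerProductSpace ℝ E] [CompleteSpace E]
  {f : E → ℝ} {f' : E} {x : E}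

theorem HasGradientAt.const_mul (c : ℝ) (hf : HasGradientAt f f' x) :
    HasGradientAt (fun y => c * f y) (c • f') x := by
  rw [hasGradientAt_iff_hasFDerivAt, map_smulₛₗ] at *
  exact hf.const_mul c

theorem HasGradientAt.log (hf : HasGradientAt f f' x) (hx : f x ≠ 0) :
    HasGradientAt (fun y => Real.log (f y)) ((f x)⁻¹ • f') x := by
  rw [hasGradientAt_iff_hasFDerivAt, map_smulₛₗ] at *
  exact hf.log hx

theorem hasGradientAt_integral_of_dominated_of_gradient_le {α : Type*} [MeasurableSpace α]
    {μ : Measure α} {F : E → α → ℝ} {G : E → α → E} {bound : α → ℝ} {s : Set E} {x₀ : E}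
    (hs : s ∈ 𝓝 x₀) (hF_meas : ∀ᶠ x in 𝓝 x₀, AEStronglyMeasurable (F x) μ)
    (hF_int : Integrable (F x₀) μ) (hG_meas : AEStronglyMeasurable (G x₀) μ)
    (h_bound : ∀ᵐ a ∂μ, ∀ x ∈ s, ‖G x a‖ ≤ bound a) (bound_integrable : Integrable bound μ)
    (h_diff : ∀ᵐ a ∂μ, ∀ x ∈ s, HasGradientAt (F · a) (G x a) x) :
    HasGradientAt (fun x => ∫ a, F x a ∂μ) (∫ a, G x₀ a ∂μ) x₀ := by
  let L : E →L[ℝ] StrongDual ℝ E := (toDual ℝ E).toContinuousLinearEquiv.toContinuousLinearMap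
  have hG_int : Integrable (G x₀) μ := bound_integrable.mono' hG_meas <|
    h_bound.mono fun a ha => ha x₀ (mem_of_mem_nhds hs)
  have h_bound' : ∀ᵐ a ∂μ, ∀ x ∈ s, ‖L (G x a)‖ ≤ bound a := by
    filter_upwards [h_bound] with a ha x hx
    simpa [L] using ha x hx
  have h_diff' : ∀ᵐ a ∂μ, ∀ x ∈ s, HasFDerivAt (F · a) (L (G x a)) x := by
    filter_upwards [h_diff] with a ha x hx
    exact (ha x hx).hasFDerivAt
  have key := hasFDerivAt_integral_of_dominated_of_fderiv_le hs hF_meas hF_int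
    (L.continuous.comp_aestronglyMeasurable hG_meas) h_bound' bound_integrable h_diff'
  rw [L.integral_comp_comm hG_int] at key
  exact hasGradientAt_iff_hasFDerivAt.mpr key

end Gradient

noncomputable def gaussianKernel {E : Type*} [NormedAddCommGroup E] (A : ℝ) (x z : E) : ℝ :=
  exp (-‖x - z‖ ^ 2 / A)

section GaussianKernel

variable {α E : Type*} [MeasurableSpace α] [NormedAddCommGroup E]
  {μ : Measure α} {w : α → ℝ} {c : α → E} {A : ℝ}

theorem gaussianKernel_pos (A : ℝ) (x z : E) : 0 < gaussianKernel A x z := exp_pos _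

theorem gaussianKernel_le_one (hA : 0 ≤ A) (x z : E) : gaussianKernel A x z ≤ 1 :=
  exp_le_one_iff.mpr (div_nonpos_of_nonpos_of_nonneg (by simp) hA)

theorem norm_sub_mul_gaussianKernel_le (hA : 0 < A) (x z : E) :
    ‖x - z‖ * gaussianKernel A x z ≤ 1 + A :=
  mul_exp_neg_sq_div_le hA _

theorem aestronglyMeasurable_gaussianKernel (hc : AEStronglyMeasurable c μ) (A : ℝ) (x : E) :
    AEStronglyMeasurable (fun a => gaussianKernel A x (c a)) μ :=
  (continuous_exp.comp (((continuous_const.sub continuous_id).norm.pow 2).neg.div_const A))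
    |>.comp_aestronglyMeasurable hc

theorem integrable_mul_gaussianKernel (hw : Integrable w μ) (hc : AEStronglyMeasurable c μ)
    (hA : 0 ≤ A) (x : E) : Integrable (fun a => w a * gaussianKernel A x (c a)) μ :=
  hw.mul_bdd (aestronglyMeasurable_gaussianKernel hc A x) <| ae_of_all _ fun a => by
    rw [norm_of_nonneg (gaussianKernel_pos A x (c a)).le]
    exact gaussianKernel_le_one hA x (c a)

theorem integral_mul_gaussianKernel_pos (hw_nonneg : ∀ a, 0 ≤ w a) (hw_pos : 0 < ∫ a, w a ∂μ)
    (hc : AEStronglyMeasurable c μ) (hA : 0 ≤ A) (x : E) :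
    0 < ∫ a, w a * gaussianKernel A x (c a) ∂μ := by
  have hw := Integrable.of_integral_ne_zero hw_pos.ne'
  have h_supp : Function.support (fun a => w a * gaussianKernel A x (c a)) = Function.support w := by
    ext a; simp [(gaussianKernel_pos A x (c a)).ne']
  rw [integral_pos_iff_support_of_nonneg (fun a => mul_nonneg (hw_nonneg a)
    (gaussianKernel_pos A x (c a)).le) (integrable_mul_gaussianKernel hw hc hA x), h_supp]
  exact (integral_pos_iff_support_of_nonneg hw_nonneg hw).mp hw_pos

section NormedSpace

variable [NormedSpace ℝ E]

theorem norm_mul_gaussianKernel_smul_sub_le (hA : 0 < A) (r : ℝ) (x z : E) :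
    ‖(r * gaussianKernel A x z) • (x - z)‖ ≤ ‖r‖ * (1 + A) := by
  rw [norm_smul, norm_mul, norm_of_nonneg (gaussianKernel_pos A x z).le, mul_assoc,
    mul_comm (gaussianKernel A x z)]
  exact mul_le_mul_of_nonneg_left (norm_sub_mul_gaussianKernel_le hA x z) (norm_nonneg _)

theorem integrable_mul_gaussianKernel_smul_sub (hw : Integrable w μ)
    (hc : AEStronglyMeasurable c μ) (hA : 0 < A) (x : E) :
    Integrable (fun a => (w a * gaussianKernel A x (c a)) • (x - c a)) μ :=
  (hw.norm.mul_const (1 + A)).mono'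
    ((integrable_mul_gaussianKernel hw hc hA.le x).aestronglyMeasurable.smul
      (aestronglyMeasurable_const.sub hc))
    (ae_of_all _ fun a => norm_mul_gaussianKernel_smul_sub_le hA (w a) x (c a))

theorem integral_mul_gaussianKernel_smul_sub [CompleteSpace E] (hw : Integrable w μ)
    (hc : AEStronglyMeasurable c μ) (hA : 0 < A) (x : E) :
    ∫ a, (w a * gaussianKernel A x (c a)) • (x - c a) ∂μ =
      (∫ a, w a * gaussianKernel A x (c a) ∂μ) • x -
        ∫ a, (w a * gaussianKernel A x (c a)) • c a ∂μ := by
  have h_x := (integrable_mul_gaussianKernel hw hc hA.le x).smul_const x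
  have h_c : Integrable (fun a => (w a * gaussianKernel A x (c a)) • c a) μ :=
    (h_x.sub (integrable_mul_gaussianKernel_smul_sub hw hc hA x)).congr
      (ae_of_all _ fun a => by simp [smul_sub])
  rw [← integral_smul_const, ← integral_sub h_x h_c]
  simp_rw [smul_sub]

end NormedSpace

section InnerProductSpace

variable [InnerProductSpace ℝ E] [CompleteSpace E]

theorem hasGradientAt_gaussianKernel (A : ℝ) (z x : E) :
    HasGradientAt (gaussianKernel A · z) ((-2 / A) • (gaussianKernel A x z • (x - z))) x := by
  have h := (((hasFDerivAt_id x).sub_const z).norm_sq.const_mul (-A⁻¹)).exp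
  have hk : (gaussianKernel A · z) = fun y => exp (-A⁻¹ * ‖id y - z‖ ^ 2) := by
    ext y; simp only [gaussianKernel, id]; ring_nf
  rw [hasGradientAt_iff_hasFDerivAt, hk]
  refine h.congr_fderiv ?_
  ext v
  simp [gaussianKernel]
  ring_nf

theorem hasGradientAt_integral_mul_gaussianKernel (hw : Integrable w μ)
    (hc : AEStronglyMeasurable c μ) (hA : 0 < A) (x₀ : E) :
    HasGradientAt (fun x => ∫ a, w a * gaussianKernel A x (c a) ∂μ)
      ((-2 / A) • ∫ a, (w a * gaussianKernel A x₀ (c a)) • (x₀ - c a) ∂μ) x₀ := by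
  rw [← integral_smul]
  refine hasGradientAt_integral_of_dominated_of_gradient_le (s := Set.univ)
    (G := fun x a => (-2 / A) • ((w a * gaussianKernel A x (c a)) • (x - c a)))
    (bound := fun a => 2 / A * (‖w a‖ * (1 + A))) Filter.univ_mem
    (Eventually.of_forall (integrable_mul_gaussianKernel hw hc hA.le · |>.aestronglyMeasurable))
    (integrable_mul_gaussianKernel hw hc hA.le x₀)
    ((integrable_mul_gaussianKernel_smul_sub hw hc hA x₀).aestronglyMeasurable.const_smul _)
    (ae_of_all _ fun a x _ => ?_) ((hw.norm.mul_const _).const_mul _)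
    (ae_of_all _ fun a x _ => ?_)
  · rw [norm_smul, norm_div, norm_neg, Real.norm_two, norm_of_nonneg hA.le]
    gcongr
    exact norm_mul_gaussianKernel_smul_sub_le hA (w a) x (c a)
  · convert (hasGradientAt_gaussianKernel A (c a) x).const_mul (w a) using 1
    module

theorem gradient_log_integral_mul_gaussianKernel (hw : Integrable w μ)
    (hc : AEStronglyMeasurable c μ) (hA : 0 < A) (x : E)
    (hg : ∫ a, w a * gaussianKernel A x (c a) ∂μ ≠ 0) :
    gradient (fun y => Real.log (∫ a, w a * gaussianKernel A y (c a) ∂μ)) x =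
      (2 / A) • ((∫ a, w a * gaussianKernel A x (c a) ∂μ)⁻¹ •
        ∫ a, (w a * gaussianKernel A x (c a)) • c a ∂μ - x) := by
  rw [((hasGradientAt_integral_mul_gaussianKernel hw hc hA x).log hg).gradient,
    integral_mul_gaussianKernel_smul_sub hw hc hA x]
  match_scalars <;> field_simp

end InnerProductSpace

end GaussianKernel

theorem conditional_tweedie_formula_general {d : ℕ} (μ : Measure (EuclideanSpace ℝ (Fin d)))
    (s σ : ℝ) (hs : s ≠ 0) (hσ : 0 < σ)
    (w : EuclideanSpace ℝ (Fin d) → ℝ)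
    (hw_nonneg : ∀ x, 0 ≤ w x)
    (hw_pos : 0 < ∫ x₀, w x₀ ∂μ)
    (gw : EuclideanSpace ℝ (Fin d) → ℝ)
    (hgw : ∀ x, gw x = ∫ x₀, w x₀ * Real.exp (-‖x - s • x₀‖ ^ 2 / (2 * s ^ 2 * σ ^ 2)) ∂μ)
    (mw : EuclideanSpace ℝ (Fin d) → EuclideanSpace ℝ (Fin d))
    (hmw : ∀ x, mw x = (gw x)⁻¹ •
      ∫ x₀, (w x₀ * Real.exp (-‖x - s • x₀‖ ^ 2 / (2 * s ^ 2 * σ ^ 2))) • x₀ ∂μ) :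
    (∀ x, 0 < gw x) ∧ Differentiable ℝ gw ∧
      ∀ x, gradient (fun y => Real.log (gw y)) x = (s ^ 2 * σ ^ 2)⁻¹ • (s • mw x - x) := by
  have hA : 0 < 2 * s ^ 2 * σ ^ 2 := by positivity
  -- a non-integrable `w` would have integral `0`
  have hw : Integrable w μ := .of_integral_ne_zero hw_pos.ne'
  have hc : AEStronglyMeasurable (fun a => s • a) μ :=
    (continuous_const_smul s).aestronglyMeasurable
  have hgw' : gw = fun x => ∫ a, w a * gaussianKernel (2 * s ^ 2 * σ ^ 2) x (s • a) ∂μ :=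
    funext hgw
  have hpos (x) : 0 < gw x := hgw' ▸ integral_mul_gaussianKernel_pos hw_nonneg hw_pos hc hA.le x
  refine ⟨hpos, fun x => ?_, fun x => ?_⟩
  · rw [hgw']
    exact (hasGradientAt_integral_mul_gaussianKernel hw hc hA x).differentiableAt
  · rw [hgw', gradient_log_integral_mul_gaussianKernel hw hc hA x (hgw' ▸ hpos x).ne', hmw,
      hgw]
    simp only [gaussianKernel, smul_comm _ s, integral_smul]
    match_scalars <;> field_simp

/-- **Conditional Tweedie's formula.** With a bounded measurable likelihood weight
`w ≥ 0` with `∫ w dμ > 0`, the weighted Gaussian-smoothed density `g_w` is positive and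
differentiable, and `∇ log g_w (x) = (s • m_w x - x) / (s² σ²)`. -/
theorem conditional_tweedie_formula {d : ℕ} (μ : Measure (EuclideanSpace ℝ (Fin d)))
    [IsProbabilityMeasure μ] (s σ : ℝ) (hs : s ≠ 0) (hσ : 0 < σ)
    (w : EuclideanSpace ℝ (Fin d) → ℝ) (hw_meas : Measurable w)
    (hw_nonneg : ∀ x, 0 ≤ w x) (hw_bdd : ∃ C, ∀ x, w x ≤ C)
    (hw_pos : 0 < ∫ x₀, w x₀ ∂μ)
    (gw : EuclideanSpace ℝ (Fin d) → ℝ)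
    (hgw : ∀ x, gw x = ∫ x₀, w x₀ * Real.exp (-‖x - s • x₀‖ ^ 2 / (2 * s ^ 2 * σ ^ 2)) ∂μ)
    (mw : EuclideanSpace ℝ (Fin d) → EuclideanSpace ℝ (Fin d))
    (hmw : ∀ x, mw x = (gw x)⁻¹ •
      ∫ x₀, (w x₀ * Real.exp (-‖x - s • x₀‖ ^ 2 / (2 * s ^ 2 * σ ^ 2))) • x₀ ∂μ) :
    (∀ x, 0 < gw x) ∧ Differentiable ℝ gw ∧
      ∀ x, gradient (fun y => Real.log (gw y)) x = (s ^ 2 * σ ^ 2)⁻¹ • (s • mw x - x) :=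
  conditional_tweedie_formula_general μ s σ hs hσ w hw_nonneg hw_pos gw hgw mw hmw
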